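/- Let n1, n2, n3, n4, m be nonnegative integers with n1 > n2, n4 ≥ n3, and m > n2; let q = max(n1, n2, n3, n4, m) and let Q be the q×q shift matrix over 𝔽₂. Then for every pair of q×q matrices G_A, G_B over 𝔽₂, with G_S = Q^{q−n3} G_A Q^{q−n1} + Q^{q−n4} G_B Q^{q−n2} and G_M = Q^{q−n3} G_A Q^{q−m} + Q^{q−n4} G_B Q^{q−m}, one has rank(G_S) − dim(range(G_S) ∩ range(G_M)) ≤ min(n1, n3). -/
import Mathlib


/-- The `q × q` lower shift matrix over `𝔽₂`: entry `(i, j)` is `1` iff `i = j + 1`. -/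
def shiftQ (q : ℕ) : Matrix (Fin q) (Fin q) (ZMod 2) :=
  Matrix.of fun i j => if (i : ℕ) = (j : ℕ) + 1 then 1 else 0

lemma shiftQ_pow_apply (q k : ℕ) (i j : Fin q) :
    (shiftQ q ^ k) i j = if (i : ℕ) = (j : ℕ) + k then 1 else 0 := by
  induction k generalizing j with
  | zero => simp [Matrix.one_apply, Fin.ext_iff]
  | succ k ih =>
    rw [pow_succ, Matrix.mul_apply]
    by_cases h : (j : ℕ) + 1 < q
    · have hcond : ∀ l : Fin q, ((l : ℕ) = (j : ℕ) + 1) ↔ l = ⟨(j : ℕ) + 1, h⟩ := by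
        intro l; simp [Fin.ext_iff]
      rw [Finset.sum_eq_single (⟨(j : ℕ) + 1, h⟩ : Fin q)]
      · rw [ih ⟨(j : ℕ) + 1, h⟩]
        have e : (j : ℕ) + 1 + k = (j : ℕ) + (k + 1) := by omega
        simp [shiftQ, e]
      · intro l _ hl
        simp [shiftQ, (hcond l).not.mpr hl]
      · simp
    · have : ∀ l : Fin q, (shiftQ q ^ k) i l * shiftQ q l j = 0 := by
        intro l
        have : ¬ ((l : ℕ) = (j : ℕ) + 1) := by omega
        simp [shiftQ, this]
      rw [Finset.sum_congr rfl fun l _ => this l, Finset.sum_const, smul_zero]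
      have : ¬ ((i : ℕ) = (j : ℕ) + (k + 1)) := by omega
      simp [this]

lemma shiftQ_pow_rank_le (q k : ℕ) : (shiftQ q ^ k).rank ≤ q - k := by
  have hfac : shiftQ q ^ k =
      shiftQ q ^ k * Matrix.diagonal (fun j : Fin q => if (j : ℕ) + k < q then (1 : ZMod 2) else 0) := by
    ext i j
    rw [Matrix.mul_diagonal, shiftQ_pow_apply]
    by_cases h : (i : ℕ) = (j : ℕ) + k
    · have : (j : ℕ) + k < q := h ▸ i.isLt
      simp [h, this]
    · simp [h]
  calc (shiftQ q ^ k).rank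
      ≤ (Matrix.diagonal (fun j : Fin q => if (j : ℕ) + k < q then (1 : ZMod 2) else 0)).rank := by
        rw [hfac]; exact Matrix.rank_mul_le_right _ _
    _ = Fintype.card {j : Fin q // (if (j : ℕ) + k < q then (1 : ZMod 2) else 0) ≠ 0} :=
        Matrix.rank_diagonal _
    _ ≤ q - k := by
        have : ∀ j : Fin q, ((if (j : ℕ) + k < q then (1 : ZMod 2) else 0) ≠ 0) ↔ (j : ℕ) + k < q := by
          intro j; by_cases h : (j : ℕ) + k < q <;> simp [h]
        rw [Fintype.card_congr (Equiv.subtypeEquivRight this)]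
        rw [Fintype.card_subtype]
        have hcard : (Finset.filter (fun x : Fin q => (x : ℕ) + k < q) Finset.univ).card ≤
            (Finset.range (q - k)).card := by
          refine Finset.card_le_card_of_injOn (fun j => (j : ℕ)) ?_ ?_
          · intro j hj; simp at hj ⊢; omega
          · intro a _ b _ h; exact Fin.ext h
        simpa using hcard

/-- Source-to-destination transfer matrix
`G_S = Q^(q-n3) G_A Q^(q-n1) + Q^(q-n4) G_B Q^(q-n2)`. -/
def GSmat (q n1 n2 n3 n4 : ℕ) (GA GB : Matrix (Fin q) (Fin q) (ZMod 2)) :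
    Matrix (Fin q) (Fin q) (ZMod 2) :=
  shiftQ q ^ (q - n3) * GA * shiftQ q ^ (q - n1) +
    shiftQ q ^ (q - n4) * GB * shiftQ q ^ (q - n2)

/-- Interference transfer matrix
`G_M = Q^(q-n3) G_A Q^(q-m) + Q^(q-n4) G_B Q^(q-m)`. -/
def GMmat (q n3 n4 m : ℕ) (GA GB : Matrix (Fin q) (Fin q) (ZMod 2)) :
    Matrix (Fin q) (Fin q) (ZMod 2) :=
  shiftQ q ^ (q - n3) * GA * shiftQ q ^ (q - m) +
    shiftQ q ^ (q - n4) * GB * shiftQ q ^ (q - m)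

/-- The achievable rate `rank G_S - dim (range G_S ∩ range G_M)` of a linear scheme. -/
noncomputable def linRate (q : ℕ) (GS GM : Matrix (Fin q) (Fin q) (ZMod 2)) : ℕ :=
  GS.rank - Module.finrank (ZMod 2)
    ↥(LinearMap.range GS.mulVecLin ⊓ LinearMap.range GM.mulVecLin)

/-- Case `n1 > n2`, `n4 ≥ n3`, `m > n2`: upper bound on the achievable rate. -/
theorem rate_upper_bound_case4
    (n1 n2 n3 n4 m q : ℕ) (hq : q = max n1 (max n2 (max n3 (max n4 m))))
    (h12 : n2 < n1) (h34 : n3 ≤ n4) (hm : n2 < m)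
    (GA GB : Matrix (Fin q) (Fin q) (ZMod 2)) :
    linRate q (GSmat q n1 n2 n3 n4 GA GB) (GMmat q n3 n4 m GA GB)
      ≤ min n1 n3 := by
  have hn1 : n1 ≤ q := by omega
  have hn3 : n3 ≤ q := by omega
  have hmq : m ≤ q := by omega
  set C : Matrix (Fin q) (Fin q) (ZMod 2) :=
    shiftQ q ^ (q - n3) * GA * (shiftQ q ^ (q - n1) + shiftQ q ^ (q - n2)) with hCdef
  have h2 : ∀ X : Matrix (Fin q) (Fin q) (ZMod 2), X + X = 0 := by
    intro X; ext i j
    simp only [Matrix.add_apply, Matrix.zero_apply, ← two_mul]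
    rw [show (2 : ZMod 2) = 0 from rfl, zero_mul]
  have habc : ∀ a b c : Matrix (Fin q) (Fin q) (ZMod 2), a + b = (a + c) + (c + b) := by
    intro a b c
    rw [add_assoc, ← add_assoc c c b, h2, zero_add]
  have e1 : (shiftQ q ^ (q - n3) * GA * shiftQ q ^ (q - m)) * shiftQ q ^ (m - n2)
      = shiftQ q ^ (q - n3) * GA * shiftQ q ^ (q - n2) := by
    rw [mul_assoc (shiftQ q ^ (q - n3) * GA), ← pow_add,
      show q - m + (m - n2) = q - n2 by omega]
  have e2 : (shiftQ q ^ (q - n4) * GB * shiftQ q ^ (q - m)) * shiftQ q ^ (m - n2)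
      = shiftQ q ^ (q - n4) * GB * shiftQ q ^ (q - n2) := by
    rw [mul_assoc (shiftQ q ^ (q - n4) * GB), ← pow_add,
      show q - m + (m - n2) = q - n2 by omega]
  have key : GSmat q n1 n2 n3 n4 GA GB =
      C + GMmat q n3 n4 m GA GB * shiftQ q ^ (m - n2) := by
    rw [GSmat, GMmat, hCdef, mul_add, add_mul, e1, e2]
    exact habc _ _ _
  set U := LinearMap.range (GSmat q n1 n2 n3 n4 GA GB).mulVecLin with hU
  set V := LinearMap.range (GMmat q n3 n4 m GA GB).mulVecLin with hV
  set W := LinearMap.range C.mulVecLin with hW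
  have hUle : U ≤ W ⊔ V := by
    rintro x ⟨y, rfl⟩
    have hx : (GSmat q n1 n2 n3 n4 GA GB).mulVecLin y =
        C.mulVecLin y +
          (GMmat q n3 n4 m GA GB).mulVecLin ((shiftQ q ^ (m - n2)).mulVecLin y) := by
      rw [key]
      simp only [Matrix.mulVecLin_add, Matrix.mulVecLin_mul, LinearMap.add_apply,
        LinearMap.comp_apply]
    rw [hx]
    exact Submodule.add_mem_sup ⟨y, rfl⟩ ⟨_, rfl⟩
  have d1 := Submodule.finrank_sup_add_finrank_inf_eq U V
  have d2 := Submodule.finrank_sup_add_finrank_inf_eq W V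
  have d3 : Module.finrank (ZMod 2) ↥(U ⊔ V) ≤ Module.finrank (ZMod 2) ↥(W ⊔ V) :=
    Submodule.finrank_mono (sup_le hUle le_sup_right)
  have hC3 : C.rank ≤ n3 := by
    calc C.rank ≤ (shiftQ q ^ (q - n3) * GA).rank := Matrix.rank_mul_le_left _ _
      _ ≤ (shiftQ q ^ (q - n3)).rank := Matrix.rank_mul_le_left _ _
      _ ≤ q - (q - n3) := shiftQ_pow_rank_le q _
      _ ≤ n3 := by omega
  have hC1 : C.rank ≤ n1 := by
    have hX : shiftQ q ^ (q - n1) + shiftQ q ^ (q - n2)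
        = shiftQ q ^ (q - n1) * (1 + shiftQ q ^ (n1 - n2)) := by
      rw [mul_add, mul_one, ← pow_add, show q - n1 + (n1 - n2) = q - n2 by omega]
    calc C.rank ≤ (shiftQ q ^ (q - n1) + shiftQ q ^ (q - n2)).rank :=
          Matrix.rank_mul_le_right _ _
      _ = (shiftQ q ^ (q - n1) * (1 + shiftQ q ^ (n1 - n2))).rank := by rw [hX]
      _ ≤ (shiftQ q ^ (q - n1)).rank := Matrix.rank_mul_le_left _ _
      _ ≤ q - (q - n1) := shiftQ_pow_rank_le q _
      _ ≤ n1 := by omega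
  have hrS : (GSmat q n1 n2 n3 n4 GA GB).rank = Module.finrank (ZMod 2) ↥U := rfl
  have hrC : C.rank = Module.finrank (ZMod 2) ↥W := rfl
  rw [linRate, ← hU, ← hV]
  omega
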